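/- arXiv:2311.11936 — 2 statements merged into one kernel-verified Lean document; each statement's English description precedes it below -/
import Mathlib

section
/- Let P be a preordered set, Y a category, and G a monoid acting on P (a multiplicative action • with (g·h) • p = g • (h • p) and 1 • p = p) such that for every g ∈ G the map p ↦ g • p is monotone. Let W : G → ℝ≥0∞ satisfy W(1) = 0 and W(g·h) ≤ W(g) + W(h). Then the interleaving distance d on functors P ⥤ Y (P viewed as a preorder category) defined by d(M, N) := sInf { max(W(g), W(h)) : M and N are (g,h)-interleaved } is an extended pseudometric: d(M, M) = 0, d(M, N) = d(N, M), and d(M, Q) ≤ d(M, N) + d(N, Q) for all functors M, N, Q : P ⥤ Y. -/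
open CategoryTheory
open scoped ENNReal

section Defs

variable {P : Type*} [Preorder P] {Y : Type*} [Category Y]
variable {G : Type*} [Monoid G] [MulAction G P]

/-- Generalized persistence modules `M N : P ⥤ Y` are `(g,h)`-interleaved with respect to a
monotone action of a monoid `G` on the preorder `P` if `p ≤ (g*h) • p` and `p ≤ (h*g) • p` for
all `p`, and there are natural families `φ_p : M p ⟶ N (g • p)` and `ψ_p : N p ⟶ M (h • p)`
whose two composites are the corresponding structure maps of `M` and `N`. -/
def Interleaved (hmono : ∀ g : G, Monotone (fun p : P => g • p)) (g h : G)
    (M N : P ⥤ Y) : Prop :=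
  ∃ (h₁ : ∀ p : P, p ≤ g • h • p) (h₂ : ∀ p : P, p ≤ h • g • p)
    (φ : ∀ p : P, M.obj p ⟶ N.obj (g • p)) (ψ : ∀ p : P, N.obj p ⟶ M.obj (h • p)),
    (∀ (p q : P) (hpq : p ≤ q),
      φ p ≫ N.map (homOfLE (hmono g hpq)) = M.map (homOfLE hpq) ≫ φ q) ∧
    (∀ (p q : P) (hpq : p ≤ q),
      ψ p ≫ M.map (homOfLE (hmono h hpq)) = N.map (homOfLE hpq) ≫ ψ q) ∧
    (∀ p : P, φ p ≫ ψ (g • p) = M.map (homOfLE (h₂ p))) ∧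
    (∀ p : P, ψ p ≫ φ (h • p) = N.map (homOfLE (h₁ p)))

/-- The interleaving distance on generalized persistence modules `P ⥤ Y` induced by a monotone
monoid action on `P` together with a monoidal weight `W` on the monoid. -/
noncomputable def interleavingDist (hmono : ∀ g : G, Monotone (fun p : P => g • p))
    (W : G → ℝ≥0∞) (M N : P ⥤ Y) : ℝ≥0∞ :=
  sInf {e | ∃ g h : G, Interleaved hmono g h M N ∧ e = max (W g) (W h)}

end Defs

section Aux

variable {P : Type*} [Preorder P] {Y : Type*} [Category Y]
variable {G : Type*} [Monoid G] [MulAction G P]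

lemma pmap_ext (F : P ⥤ Y) {a b : P} (f g : a ⟶ b) : F.map f = F.map g :=
  congrArg F.map (Subsingleton.elim f g)

lemma interleaved_refl (hmono : ∀ g : G, Monotone (fun p : P => g • p)) (M : P ⥤ Y) :
    Interleaved hmono (1 : G) (1 : G) M M := by
  refine ⟨fun p => by simp, fun p => by simp,
    fun p => M.map (homOfLE (by simp : p ≤ (1 : G) • p)),
    fun p => M.map (homOfLE (by simp : p ≤ (1 : G) • p)), ?_, ?_, ?_, ?_⟩ <;>
    intros <;> rw [← Functor.map_comp] <;>
    first
      | exact pmap_ext M _ _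
      | (rw [← Functor.map_comp]; exact pmap_ext M _ _)

lemma interleaved_symm (hmono : ∀ g : G, Monotone (fun p : P => g • p)) {g h : G}
    {M N : P ⥤ Y} (I : Interleaved hmono g h M N) : Interleaved hmono h g N M := by
  obtain ⟨a, b, φ, ψ, nφ, nψ, c, d⟩ := I
  exact ⟨b, a, ψ, φ, nψ, nφ, d, c⟩

lemma interleaved_comp (hmono : ∀ g : G, Monotone (fun p : P => g • p)) {g₁ h₁ g₂ h₂ : G}
    {M N Q : P ⥤ Y} (I₁ : Interleaved hmono g₁ h₁ M N) (I₂ : Interleaved hmono g₂ h₂ N Q) :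
    Interleaved hmono (g₂ * g₁) (h₁ * h₂) M Q := by
  obtain ⟨a₁, b₁, φ₁, ψ₁, nφ₁, nψ₁, c₁, d₁⟩ := I₁
  obtain ⟨a₂, b₂, φ₂, ψ₂, nφ₂, nψ₂, c₂, d₂⟩ := I₂
  -- continuation-style, proof-irrelevant versions of the hypotheses
  have Nφ₁ : ∀ (p q : P) (hpq : p ≤ q) (h' : g₁ • p ≤ g₁ • q) {Z : Y}
      (f : N.obj (g₁ • q) ⟶ Z),
      φ₁ p ≫ N.map (homOfLE h') ≫ f = M.map (homOfLE hpq) ≫ φ₁ q ≫ f := by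
    intro p q hpq h' Z f
    have e : φ₁ p ≫ N.map (homOfLE h') = M.map (homOfLE hpq) ≫ φ₁ q := nφ₁ p q hpq
    rw [← Category.assoc, e, Category.assoc]
  have Nψ₁ : ∀ (p q : P) (hpq : p ≤ q) (h' : h₁ • p ≤ h₁ • q) {Z : Y}
      (f : M.obj (h₁ • q) ⟶ Z),
      ψ₁ p ≫ M.map (homOfLE h') ≫ f = N.map (homOfLE hpq) ≫ ψ₁ q ≫ f := by
    intro p q hpq h' Z f
    have e : ψ₁ p ≫ M.map (homOfLE h') = N.map (homOfLE hpq) ≫ ψ₁ q := nψ₁ p q hpq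
    rw [← Category.assoc, e, Category.assoc]
  have Nφ₂ : ∀ (p q : P) (hpq : p ≤ q) (h' : g₂ • p ≤ g₂ • q) {Z : Y}
      (f : Q.obj (g₂ • q) ⟶ Z),
      φ₂ p ≫ Q.map (homOfLE h') ≫ f = N.map (homOfLE hpq) ≫ φ₂ q ≫ f := by
    intro p q hpq h' Z f
    have e : φ₂ p ≫ Q.map (homOfLE h') = N.map (homOfLE hpq) ≫ φ₂ q := nφ₂ p q hpq
    rw [← Category.assoc, e, Category.assoc]
  have Nψ₂ : ∀ (p q : P) (hpq : p ≤ q) (h' : h₂ • p ≤ h₂ • q) {Z : Y}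
      (f : N.obj (h₂ • q) ⟶ Z),
      ψ₂ p ≫ N.map (homOfLE h') ≫ f = Q.map (homOfLE hpq) ≫ ψ₂ q ≫ f := by
    intro p q hpq h' Z f
    have e : ψ₂ p ≫ N.map (homOfLE h') = Q.map (homOfLE hpq) ≫ ψ₂ q := nψ₂ p q hpq
    rw [← Category.assoc, e, Category.assoc]
  have C₁ : ∀ (p : P) {Z : Y} (f : M.obj (h₁ • g₁ • p) ⟶ Z),
      φ₁ p ≫ ψ₁ (g₁ • p) ≫ f = M.map (homOfLE (b₁ p)) ≫ f := by
    intro p Z f; rw [← Category.assoc, c₁ p]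
  have C₂ : ∀ (p : P) {Z : Y} (f : N.obj (h₂ • g₂ • p) ⟶ Z),
      φ₂ p ≫ ψ₂ (g₂ • p) ≫ f = N.map (homOfLE (b₂ p)) ≫ f := by
    intro p Z f; rw [← Category.assoc, c₂ p]
  have D₁ : ∀ (p : P) {Z : Y} (f : N.obj (g₁ • h₁ • p) ⟶ Z),
      ψ₁ p ≫ φ₁ (h₁ • p) ≫ f = N.map (homOfLE (a₁ p)) ≫ f := by
    intro p Z f; rw [← Category.assoc, d₁ p]
  have D₂ : ∀ (p : P) {Z : Y} (f : Q.obj (g₂ • h₂ • p) ⟶ Z),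
      ψ₂ p ≫ φ₂ (h₂ • p) ≫ f = Q.map (homOfLE (a₂ p)) ≫ f := by
    intro p Z f; rw [← Category.assoc, d₂ p]
  have hA : ∀ p : P, p ≤ (g₂ * g₁) • (h₁ * h₂) • p := by
    intro p
    rw [mul_smul, mul_smul]
    exact (a₂ p).trans (hmono g₂ (a₁ (h₂ • p)))
  have hB : ∀ p : P, p ≤ (h₁ * h₂) • (g₂ * g₁) • p := by
    intro p
    rw [mul_smul, mul_smul]
    exact (b₁ p).trans (hmono h₁ (b₂ (g₁ • p)))
  refine ⟨hA, hB,
    fun p => φ₁ p ≫ φ₂ (g₁ • p) ≫ Q.map (homOfLE (mul_smul g₂ g₁ p).symm.le),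
    fun p => ψ₂ p ≫ ψ₁ (h₂ • p) ≫ M.map (homOfLE (mul_smul h₁ h₂ p).symm.le),
    ?_, ?_, ?_, ?_⟩
  · intro p q hpq
    have key : Q.map (homOfLE (mul_smul g₂ g₁ p).symm.le) ≫
        Q.map (homOfLE (hmono (g₂ * g₁) hpq)) =
        Q.map (homOfLE (hmono g₂ (hmono g₁ hpq))) ≫
          Q.map (homOfLE (mul_smul g₂ g₁ q).symm.le) := by
      rw [← Functor.map_comp, ← Functor.map_comp]
      exact pmap_ext Q _ _
    simp only [Category.assoc]
    rw [key, Nφ₂ (g₁ • p) (g₁ • q) (hmono g₁ hpq) (hmono g₂ (hmono g₁ hpq)),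
      Nφ₁ p q hpq (hmono g₁ hpq)]
  · intro p q hpq
    have key : M.map (homOfLE (mul_smul h₁ h₂ p).symm.le) ≫
        M.map (homOfLE (hmono (h₁ * h₂) hpq)) =
        M.map (homOfLE (hmono h₁ (hmono h₂ hpq))) ≫
          M.map (homOfLE (mul_smul h₁ h₂ q).symm.le) := by
      rw [← Functor.map_comp, ← Functor.map_comp]
      exact pmap_ext M _ _
    simp only [Category.assoc]
    rw [key, Nψ₁ (h₂ • p) (h₂ • q) (hmono h₂ hpq) (hmono h₁ (hmono h₂ hpq)),
      Nψ₂ p q hpq (hmono h₂ hpq)]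
  · intro p
    have le₀ : g₂ • g₁ • p ≤ (g₂ * g₁) • p := (mul_smul g₂ g₁ p).symm.le
    simp only [Category.assoc]
    rw [← Nψ₂ (g₂ • g₁ • p) ((g₂ * g₁) • p) le₀ (hmono h₂ le₀),
      C₂ (g₁ • p), ← Functor.map_comp_assoc, homOfLE_comp,
      ← Nψ₁ (g₁ • p) (h₂ • (g₂ * g₁) • p) ((b₂ (g₁ • p)).trans (hmono h₂ le₀))
        (hmono h₁ ((b₂ (g₁ • p)).trans (hmono h₂ le₀))),
      C₁ p, ← Functor.map_comp, ← Functor.map_comp]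
    exact pmap_ext M _ _
  · intro p
    have le₀ : h₁ • h₂ • p ≤ (h₁ * h₂) • p := (mul_smul h₁ h₂ p).symm.le
    simp only [Category.assoc]
    rw [← Nφ₁ (h₁ • h₂ • p) ((h₁ * h₂) • p) le₀ (hmono g₁ le₀),
      D₁ (h₂ • p), ← Functor.map_comp_assoc, homOfLE_comp,
      ← Nφ₂ (h₂ • p) (g₁ • (h₁ * h₂) • p) ((a₁ (h₂ • p)).trans (hmono g₁ le₀))
        (hmono g₂ ((a₁ (h₂ • p)).trans (hmono g₁ le₀))),
      D₂ p, ← Functor.map_comp, ← Functor.map_comp]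
    exact pmap_ext Q _ _

end Aux

/-- For a monotone action of a monoid `G` on a preorder `P`, a weight
`W : G → ℝ≥0∞` with `W 1 = 0` and `W (g*h) ≤ W g + W h` induces an interleaving distance on the
space of generalized persistence modules `P ⥤ Y` which is an extended pseudometric. -/
theorem stmt_7 {P : Type*} [Preorder P] {Y : Type*} [Category Y]
    {G : Type*} [Monoid G] [MulAction G P]
    (hmono : ∀ g : G, Monotone (fun p : P => g • p))
    (W : G → ℝ≥0∞) (hW_one : W 1 = 0) (hW_mul : ∀ g h : G, W (g * h) ≤ W g + W h) :
    (∀ M : P ⥤ Y, interleavingDist hmono W M M = 0) ∧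
    (∀ M N : P ⥤ Y, interleavingDist hmono W M N = interleavingDist hmono W N M) ∧
    (∀ M N Q : P ⥤ Y, interleavingDist hmono W M Q ≤
      interleavingDist hmono W M N + interleavingDist hmono W N Q) := by
  refine ⟨?_, ?_, ?_⟩
  · intro M
    refine le_antisymm ?_ zero_le
    have : (0 : ℝ≥0∞) ∈ {e | ∃ g h : G, Interleaved hmono g h M M ∧ e = max (W g) (W h)} :=
      ⟨1, 1, interleaved_refl hmono M, by simp [hW_one]⟩
    exact sInf_le this
  · intro M N
    unfold interleavingDist
    congr 1
    ext e
    constructor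
    · rintro ⟨g, h, I, rfl⟩
      exact ⟨h, g, interleaved_symm hmono I, (max_comm _ _)⟩
    · rintro ⟨g, h, I, rfl⟩
      exact ⟨h, g, interleaved_symm hmono I, (max_comm _ _)⟩
  · intro M N Q
    unfold interleavingDist
    rw [ENNReal.sInf_add]
    refine le_iInf₂ fun a ha => ?_
    rw [add_comm, ENNReal.sInf_add]
    refine le_iInf₂ fun b hb => ?_
    obtain ⟨g₁, h₁, I₁, rfl⟩ := ha
    obtain ⟨g₂, h₂, I₂, rfl⟩ := hb
    refine le_trans (sInf_le ⟨g₂ * g₁, h₁ * h₂, interleaved_comp hmono I₁ I₂, rfl⟩) ?_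
    refine max_le ?_ ?_
    · exact (hW_mul g₂ g₁).trans (add_le_add (le_max_left _ _) (le_max_left _ _))
    · refine (hW_mul h₁ h₂).trans ?_
      rw [add_comm]
      exact add_le_add (le_max_right _ _) (le_max_right _ _)
end

section
/- Let K be a field and let 0 < a ≤ b be real numbers. Consider the preordered set P = ℝ≥0 (nonnegative reals with the usual order), the group G of positive reals under multiplication acting on P by multiplication (a monotone action), and the weight W(t) := ENNReal.ofReal |Real.log t| on G, which satisfies W(1) = 0 and W(t·t') ≤ W(t) + W(t'). Then the multiplicative interleaving distance d(M_{[a,b)}, 0), taken between the interval module M_{[a,b)} : P ⥤ Vec_K and the zero module with respect to the interleaving induced by this group action and weight, equals ENNReal.ofReal((Real.log b − Real.log a)/2). -/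
open CategoryTheory
open scoped ENNReal NNReal

section SegmentModule

open Classical in
/-- The value at `p` of the "indicator" persistence module of a subset `S` of a preorder `P`:
the line `K` if `p ∈ S` and the zero space otherwise. -/
noncomputable def segObj (K : Type) [Field K] {P : Type} [Preorder P] (S : Set P) (p : P) :
    ModuleCat K :=
  if p ∈ S then ModuleCat.of K K else ModuleCat.of K PUnit

open Classical in
/-- The structure maps of the indicator persistence module of `S`. -/
noncomputable def segMap (K : Type) [Field K] {P : Type} [Preorder P] (S : Set P) (r s : P) :
    segObj K S r ⟶ segObj K S s :=
  if h : r ∈ S ∧ s ∈ S then eqToHom (by unfold segObj; rw [if_pos h.1, if_pos h.2]) else 0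

/-- The indicator persistence module of an order-convex subset `S` of a preorder `P`. -/
noncomputable def segmentModule (K : Type) [Field K] {P : Type} [Preorder P] (S : Set P)
    (hS : ∀ {r s t : P}, r ≤ s → s ≤ t → r ∈ S → t ∈ S → s ∈ S) : P ⥤ ModuleCat K where
  obj p := segObj K S p
  map {r s} _ := segMap K S r s
  map_id p := by
    show segMap K S p p = 𝟙 (segObj K S p)
    unfold segMap
    by_cases hp : p ∈ S
    · rw [dif_pos ⟨hp, hp⟩]
      exact eqToHom_refl (segObj K S p) _
    · haveI : Subsingleton (segObj K S p) := by
        unfold segObj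
        rw [if_neg hp]
        exact inferInstanceAs (Subsingleton PUnit)
      exact ModuleCat.hom_ext (LinearMap.ext fun x => Subsingleton.elim _ _)
  map_comp {r s t} f g := by
    show segMap K S r t = segMap K S r s ≫ segMap K S s t
    unfold segMap
    by_cases hrt : r ∈ S ∧ t ∈ S
    · have hs : s ∈ S := hS (leOfHom f) (leOfHom g) hrt.1 hrt.2
      rw [dif_pos hrt, dif_pos ⟨hrt.1, hs⟩, dif_pos ⟨hs, hrt.2⟩, eqToHom_trans]
    · by_cases hr : r ∈ S
      · have ht : t ∉ S := fun h => hrt ⟨hr, h⟩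
        rw [dif_neg hrt, dif_neg (fun h : s ∈ S ∧ t ∈ S => ht h.2)]
        exact (Limits.comp_zero).symm
      · rw [dif_neg hrt, dif_neg (fun h : r ∈ S ∧ s ∈ S => hr h.1)]
        exact (Limits.zero_comp).symm

end SegmentModule

/-- The group of positive reals (realized as the units of `ℝ≥0`) acts monotonically on the
poset `ℝ≥0` by multiplication. -/
theorem unitsNNReal_smul_monotone : ∀ g : ℝ≥0ˣ, Monotone (fun p : ℝ≥0 => g • p) :=
  fun g _ _ hpq => mul_le_mul_of_nonneg_left hpq (g : ℝ≥0).2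

/-- The logarithmic weight `W t = |log t|` on the multiplicative group of positive reals. -/
noncomputable def logWeight (g : ℝ≥0ˣ) : ℝ≥0∞ :=
  ENNReal.ofReal |Real.log ((g : ℝ≥0) : ℝ)|

/-- The interval module `M_{[a,b)} : ℝ≥0 ⥤ Vec_K` over the poset of nonnegative reals. -/
noncomputable def intervalModuleNN (K : Type) [Field K] (a b : ℝ) : ℝ≥0 ⥤ ModuleCat K :=
  segmentModule K {r : ℝ≥0 | a ≤ (r : ℝ) ∧ (r : ℝ) < b}
    (fun hrs hst hr ht =>
      ⟨le_trans hr.1 (NNReal.coe_le_coe.mpr hrs),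
        lt_of_le_of_lt (NNReal.coe_le_coe.mpr hst) ht.2⟩)

/-- The zero persistence module `ℝ≥0 ⥤ Vec_K`. -/
noncomputable def zeroModuleNN (K : Type) [Field K] : ℝ≥0 ⥤ ModuleCat K :=
  (Functor.const ℝ≥0).obj (ModuleCat.of K PUnit)

/-- For `0 < a ≤ b`, the interleaving distance between the interval module
`M_{[a,b)} : ℝ≥0 ⥤ Vec_K` and the zero module — induced by the multiplicative action of the
group of positive reals on `ℝ≥0` with weight `W t = |log t|` (a weight with `W 1 = 0` and
`W (t * t') ≤ W t + W t'`) — equals `(log b − log a) / 2`. -/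

theorem stmt_13 (K : Type) [Field K] (a b : ℝ) (ha : 0 < a) (hab : a ≤ b) :
    logWeight 1 = 0 ∧
    (∀ g h : ℝ≥0ˣ, logWeight (g * h) ≤ logWeight g + logWeight h) ∧
    interleavingDist unitsNNReal_smul_monotone logWeight
        (intervalModuleNN K a b) (zeroModuleNN K) =
      ENNReal.ofReal ((Real.log b - Real.log a) / 2) := by
  have hb : (0:ℝ) < b := lt_of_lt_of_le ha hab
  refine ⟨?_, ?_, ?_⟩
  · simp [logWeight]
  · intro g h
    have hg0 : ((g : ℝ≥0) : ℝ) ≠ 0 := NNReal.coe_ne_zero.mpr g.ne_zero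
    have hh0 : ((h : ℝ≥0) : ℝ) ≠ 0 := NNReal.coe_ne_zero.mpr h.ne_zero
    have hmul : Real.log (((g * h : ℝ≥0ˣ) : ℝ≥0) : ℝ)
        = Real.log ((g : ℝ≥0) : ℝ) + Real.log ((h : ℝ≥0) : ℝ) := by
      rw [Units.val_mul, NNReal.coe_mul]
      exact Real.log_mul hg0 hh0
    calc logWeight (g * h) = ENNReal.ofReal |Real.log ((g : ℝ≥0) : ℝ) + Real.log ((h : ℝ≥0) : ℝ)| := by
          rw [logWeight, hmul]
      _ ≤ ENNReal.ofReal (|Real.log ((g : ℝ≥0) : ℝ)| + |Real.log ((h : ℝ≥0) : ℝ)|) :=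
          ENNReal.ofReal_le_ofReal (abs_add_le _ _)
      _ ≤ logWeight g + logWeight h := ENNReal.ofReal_add_le
  · set S : Set ℝ≥0 := {r : ℝ≥0 | a ≤ (r : ℝ) ∧ (r : ℝ) < b} with hSdef
    haveI hZsub : ∀ q : ℝ≥0, Subsingleton ((zeroModuleNN K).obj q) :=
      fun _ => inferInstanceAs (Subsingleton PUnit)
    set D : ℝ≥0∞ := ENNReal.ofReal ((Real.log b - Real.log a) / 2) with hDdef
    refine le_antisymm ?_ ?_
    · -- upper bound: exhibit an interleaving
      have hba1 : (1:ℝ) ≤ b / a := (one_le_div ha).mpr hab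
      set s : ℝ := Real.sqrt (b / a) with hsdef
      have hs0 : 0 ≤ s := Real.sqrt_nonneg _
      have hs1 : (1:ℝ) ≤ s := by
        rw [show (1:ℝ) = Real.sqrt 1 by simp]
        exact Real.sqrt_le_sqrt hba1
      have hssq : s * s = b / a := Real.mul_self_sqrt (div_nonneg hb.le ha.le)
      set c : ℝ≥0 := s.toNNReal with hcdef
      have hcoe : (c : ℝ) = s := Real.coe_toNNReal _ hs0
      have hc1 : (1:ℝ≥0) ≤ c := by
        rw [← NNReal.coe_le_coe, hcoe, NNReal.coe_one]; exact hs1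
      have hc0 : c ≠ 0 := by
        intro hc; rw [hc] at hc1; exact absurd (le_antisymm hc1 zero_le) one_ne_zero
      set g : ℝ≥0ˣ := Units.mk0 c hc0 with hgdef
      have hgc : (g : ℝ≥0) = c := rfl
      have hle : ∀ q : ℝ≥0, q ≤ c * q := fun q => le_mul_of_one_le_left zero_le hc1
      have h₁ : ∀ p : ℝ≥0, p ≤ g • g • p := fun p =>
        le_trans (hle p) (mul_le_mul_right (hle p) c)
      have hzero : ∀ p : ℝ≥0, ¬ (p ∈ S ∧ g • g • p ∈ S) := by
        rintro p ⟨⟨hap, _⟩, ⟨_, hlt⟩⟩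
        have hval : ((g • g • p : ℝ≥0) : ℝ) = s * (s * (p : ℝ)) := by
          show ((c * (c * p) : ℝ≥0) : ℝ) = s * (s * (p : ℝ))
          rw [NNReal.coe_mul, NNReal.coe_mul, hcoe]
        have hge : b ≤ ((g • g • p : ℝ≥0) : ℝ) := by
          rw [hval, ← mul_assoc, hssq]
          calc b = (b / a) * a := (div_mul_cancel₀ b ha.ne').symm
            _ ≤ (b / a) * (p : ℝ) := by
                exact mul_le_mul_of_nonneg_left hap (div_nonneg hb.le ha.le)
        exact absurd hlt (not_lt.mpr hge)
      have hInt : Interleaved unitsNNReal_smul_monotone g g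
          (intervalModuleNN K a b) (zeroModuleNN K) := by
        refine ⟨h₁, h₁, fun p => 0, fun p => 0, ?_, ?_, ?_, ?_⟩
        · intro p q hpq; simp
        · intro p q hpq; simp
        · intro p
          show (0 : _ ⟶ _) ≫ (0 : _ ⟶ _) = segMap K S p (g • g • p)
          rw [segMap, dif_neg (hzero p)]
          simp
        · intro p
          exact ModuleCat.hom_ext (LinearMap.ext fun x => Subsingleton.elim _ _)
      have hWg : logWeight g = D := by
        rw [logWeight, hgc, hcoe, hDdef]
        congr 1
        rw [abs_of_nonneg (Real.log_nonneg hs1), hsdef, Real.log_sqrt (div_nonneg hb.le ha.le),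
          Real.log_div hb.ne' ha.ne']
      exact sInf_le ⟨g, g, hInt, by rw [hWg, max_self]⟩
    · -- lower bound
      refine le_sInf ?_
      rintro e ⟨g, h, ⟨h₁, h₂, φ, ψ, _, _, c3, _⟩, rfl⟩
      rcases eq_or_lt_of_le hab with heq | hab'
      · have : D = 0 := by rw [hDdef, heq]; simp
        rw [this]; exact zero_le
      · set p : ℝ≥0 := ⟨a, ha.le⟩ with hpdef
        have hpS : p ∈ S := ⟨le_refl a, hab'⟩
        have hφ0 : φ p = 0 := ModuleCat.hom_ext (LinearMap.ext fun x => Subsingleton.elim _ _)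
        have hM0 : (intervalModuleNN K a b).map (homOfLE (h₂ p)) = 0 := by
          rw [← c3 p, hφ0]; simp
        have hq : h • g • p ∉ S := by
          intro hqS
          have e' : segObj K S p = segObj K S (h • g • p) := by
            unfold segObj; rw [if_pos hpS, if_pos hqS]
          have hseg : segMap K S p (h • g • p) = 0 := hM0
          rw [segMap, dif_pos ⟨hpS, hqS⟩] at hseg
          have hid : 𝟙 (segObj K S p) = 0 := by
            calc 𝟙 (segObj K S p) = eqToHom e' ≫ eqToHom e'.symm := by
                  rw [eqToHom_trans, eqToHom_refl]
              _ = 0 ≫ eqToHom e'.symm := by rw [show eqToHom e' = 0 from hseg]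
              _ = 0 := by simp
          haveI hsub : Subsingleton (segObj K S p) := by
            refine ⟨fun x y => ?_⟩
            have hx : x = 0 := by simpa using congrArg (fun f => ModuleCat.Hom.hom f x) hid
            have hy : y = 0 := by simpa using congrArg (fun f => ModuleCat.Hom.hom f y) hid
            exact hx.trans hy.symm
          have hnt : Nontrivial (segObj K S p) := by
            unfold segObj; rw [if_pos hpS]
            exact inferInstanceAs (Nontrivial K)
          exact (not_subsingleton _) hsub
        have hx : (a:ℝ) ≤ ((h • g • p : ℝ≥0) : ℝ) :=
          le_trans hpS.1 (NNReal.coe_le_coe.mpr (h₂ p))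
        have hbx : b ≤ ((h • g • p : ℝ≥0) : ℝ) := by
          by_contra hlt
          exact hq ⟨hx, lt_of_not_ge hlt⟩
        have hval : ((h • g • p : ℝ≥0) : ℝ) = ((h : ℝ≥0) : ℝ) * (((g : ℝ≥0) : ℝ) * a) := by
          show (((h : ℝ≥0) * ((g : ℝ≥0) * p) : ℝ≥0) : ℝ) = _
          rw [NNReal.coe_mul, NNReal.coe_mul]
          rfl
        have hgpos : (0:ℝ) < ((g : ℝ≥0) : ℝ) :=
          lt_of_le_of_ne (NNReal.coe_nonneg _) (Ne.symm (NNReal.coe_ne_zero.mpr g.ne_zero))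
        have hhpos : (0:ℝ) < ((h : ℝ≥0) : ℝ) :=
          lt_of_le_of_ne (NNReal.coe_nonneg _) (Ne.symm (NNReal.coe_ne_zero.mpr h.ne_zero))
        have hlog : Real.log b - Real.log a ≤
            Real.log (((h : ℝ≥0) : ℝ)) + Real.log (((g : ℝ≥0) : ℝ)) := by
          have := Real.log_le_log hb (hval ▸ hbx)
          rw [Real.log_mul hhpos.ne' (mul_pos hgpos ha).ne',
            Real.log_mul hgpos.ne' ha.ne'] at this
          linarith
        have hreal : (Real.log b - Real.log a) / 2 ≤
            max |Real.log (((g : ℝ≥0) : ℝ))| |Real.log (((h : ℝ≥0) : ℝ))| := by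
          have h1 : Real.log (((g : ℝ≥0) : ℝ)) ≤ |Real.log (((g : ℝ≥0) : ℝ))| := le_abs_self _
          have h2 : Real.log (((h : ℝ≥0) : ℝ)) ≤ |Real.log (((h : ℝ≥0) : ℝ))| := le_abs_self _
          have h3 := le_max_left |Real.log (((g : ℝ≥0) : ℝ))| |Real.log (((h : ℝ≥0) : ℝ))|
          have h4 := le_max_right |Real.log (((g : ℝ≥0) : ℝ))| |Real.log (((h : ℝ≥0) : ℝ))|
          linarith
        calc D ≤ ENNReal.ofReal (max |Real.log (((g : ℝ≥0) : ℝ))| |Real.log (((h : ℝ≥0) : ℝ))|) :=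
              ENNReal.ofReal_le_ofReal hreal
          _ = max (logWeight g) (logWeight h) := by
              rw [logWeight, logWeight]
              exact (Monotone.map_max (fun _ _ hxy => ENNReal.ofReal_le_ofReal hxy))
end
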